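/- arXiv:1811.04882 — 6 statements merged into one kernel-verified Lean document; each statement's English description precedes it below -/
import Mathlib

section
/- A sequence (g_n) in a Riesz ideal I of C(X, ℝ) is a strict I-Cauchy sequence if and only if there exists b ∈ I with b ≥ 0 such that |g_n| ≤ b for all n and (g_n) is a Cauchy sequence for uniform convergence on every compact subset of X. -/
variable {X : Type*} [TopologicalSpace X]

def IsRieszIdeal (I : Set C(X, ℝ)) : Prop :=
  (0 : C(X, ℝ)) ∈ I ∧ (∀ f g : C(X, ℝ), f ∈ I → g ∈ I → f + g ∈ I) ∧
    (∀ (c : ℝ) (f : C(X, ℝ)), f ∈ I → c • f ∈ I) ∧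
    (∀ f g : C(X, ℝ), g ∈ I → (∀ x, |f x| ≤ |g x|) → f ∈ I)

/-- A decreasing sequence of continuous functions with pointwise infimum `0`. -/
def DecrPtwInfZero (f : ℕ → C(X, ℝ)) : Prop :=
  (∀ k, f (k + 1) ≤ f k) ∧ ∀ x, IsGLB (Set.range fun k => f k x) 0

/-- The sequence `g` is strictly `I`-convergent to `g'`. -/
def StrictConvTo (I : Set C(X, ℝ)) (g : ℕ → C(X, ℝ)) (g' : C(X, ℝ)) : Prop :=
  ∃ f : ℕ → C(X, ℝ), (∀ k, f k ∈ I) ∧ DecrPtwInfZero f ∧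
    ∀ k, ∃ N, ∀ n ≥ N, ∀ x, |g' x - g n x| ≤ f k x

/-- The sequence `g` is a strict `I`-Cauchy sequence. -/
def StrictCauchy (I : Set C(X, ℝ)) (g : ℕ → C(X, ℝ)) : Prop :=
  ∃ f : ℕ → C(X, ℝ), (∀ k, f k ∈ I) ∧ DecrPtwInfZero f ∧
    ∀ k, ∃ N, ∀ n ≥ N, ∀ x, |g n x - g N x| ≤ f k x

def IClosed (I : Set C(X, ℝ)) (S : Set C(X, ℝ)) : Prop :=
  ∀ (g : ℕ → C(X, ℝ)) (g' : C(X, ℝ)), (∀ n, g n ∈ S) → StrictConvTo I g g' → g' ∈ S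

def IClosure (I : Set C(X, ℝ)) (S : Set C(X, ℝ)) : Set C(X, ℝ) :=
  ⋂₀ {C | C ⊆ I ∧ S ⊆ C ∧ IClosed I C}

private lemma rieszIdeal_sum_mem {I : Set C(X, ℝ)} (hI : IsRieszIdeal I)
    (s : Finset ℕ) (f : ℕ → C(X, ℝ)) (h : ∀ i ∈ s, f i ∈ I) :
    (∑ i ∈ s, f i) ∈ I :=
  Finset.sum_induction f (· ∈ I) (fun a b ha hb => hI.2.1 a b ha hb) hI.1 h

theorem strictCauchy_iff
    (X : Type*) [TopologicalSpace X] [LocallyCompactSpace X] [T2Space X] [LindelofSpace X]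
    (I : Set C(X, ℝ)) (hI : IsRieszIdeal I)
    (g : ℕ → C(X, ℝ)) (hg : ∀ n, g n ∈ I) :
    StrictCauchy I g ↔
      (∃ b ∈ I, 0 ≤ b ∧ (∀ n x, |g n x| ≤ b x) ∧
        ∀ K : Set X, IsCompact K → ∀ ε > (0 : ℝ), ∃ N, ∀ m ≥ N, ∀ n ≥ N, ∀ x ∈ K,
          |g m x - g n x| ≤ ε) := by
  constructor
  · rintro ⟨f, hfI, ⟨hdec, hglb⟩, hcau⟩
    have hanti : Antitone f := antitone_nat_of_succ_le hdec
    have hf0 : ∀ k x, 0 ≤ f k x := fun k x => (hglb x).1 ⟨k, rfl⟩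
    have hdini : ∀ K : Set X, IsCompact K → ∀ ε : ℝ, 0 < ε → ∃ k, ∀ x ∈ K, f k x < ε := by
      intro K hK ε hε
      have hcov : K ⊆ ⋃ k, {x | f k x < ε} := by
        intro x _
        obtain ⟨y, ⟨k, rfl⟩, hy⟩ := (hglb x).exists_between hε
        exact Set.mem_iUnion.2 ⟨k, hy.2⟩
      obtain ⟨t, ht⟩ := hK.elim_finite_subcover (fun k => {x | f k x < ε})
        (fun k => isOpen_lt (map_continuous (f k)) continuous_const) hcov
      refine ⟨t.sup id, fun x hx => ?_⟩
      obtain ⟨k, hkt, hk⟩ := Set.mem_iUnion₂.1 (ht hx)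
      exact lt_of_le_of_lt
        (ContinuousMap.le_def.1 (hanti (Finset.le_sup (f := id) hkt)) x) hk
    obtain ⟨N₀, hN₀⟩ := hcau 0
    set b : C(X, ℝ) := f 0 + ∑ i ∈ Finset.range (N₀ + 1), |g i| with hb
    have habs : ∀ i : ℕ, |g i| ∈ I := fun i => hI.2.2.2 |g i| (g i) (hg i) (fun x => by simp)
    have hbI : b ∈ I := hI.2.1 _ _ (hfI 0) (rieszIdeal_sum_mem hI _ _ fun i _ => habs i)
    have hbx : ∀ x, b x = f 0 x + ∑ i ∈ Finset.range (N₀ + 1), |g i x| := by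
      intro x; simp [hb]
    refine ⟨b, hbI, ?_, ?_, ?_⟩
    · rw [ContinuousMap.le_def]
      intro x
      rw [ContinuousMap.zero_apply, hbx]
      have h1 : (0:ℝ) ≤ ∑ i ∈ Finset.range (N₀+1), |g i x| :=
        Finset.sum_nonneg fun i _ => abs_nonneg _
      linarith [hf0 0 x]
    · intro n x
      rcases le_or_gt n N₀ with h | h
      · have h1 : |g n x| ≤ ∑ i ∈ Finset.range (N₀+1), |g i x| :=
          Finset.single_le_sum (f := fun i => |g i x|) (fun i _ => abs_nonneg _)
            (Finset.mem_range.2 (Nat.lt_succ_of_le h))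
        rw [hbx]; linarith [hf0 0 x]
      · have h1 := hN₀ n h.le x
        have h2 : |g N₀ x| ≤ ∑ i ∈ Finset.range (N₀+1), |g i x| :=
          Finset.single_le_sum (f := fun i => |g i x|) (fun i _ => abs_nonneg _)
            (Finset.mem_range.2 (Nat.lt_succ_self _))
        rw [hbx]
        have h3 : |g n x| - |g N₀ x| ≤ |g n x - g N₀ x| := abs_sub_abs_le_abs_sub _ _
        linarith
    · intro K hK ε hε
      obtain ⟨k, hk⟩ := hdini K hK (ε/2) (by linarith)
      obtain ⟨N, hN⟩ := hcau k
      refine ⟨N, fun m hm n hn x hx => ?_⟩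
      have h1 := hN m hm x
      have h2 := hN n hn x
      have h3 : |g m x - g n x| ≤ |g m x - g N x| + |g N x - g n x| := abs_sub_le _ _ _
      have h4 : |g N x - g n x| = |g n x - g N x| := abs_sub_comm _ _
      have h5 := hk x hx
      linarith
  · rintro ⟨b, hbI, hb0, hbd, hcau⟩
    haveI : SigmaCompactSpace X := by
      choose Kc hKc hKn using fun x : X => exists_compact_mem_nhds x
      obtain ⟨s, hsc, hsU⟩ := countable_cover_nhds hKn
      constructor
      rw [← hsU]
      exact isSigmaCompact_biUnion hsc fun i _ => (hKc i).isSigmaCompact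
    set K := CompactExhaustion.choice X with hK
    have hbx : ∀ x, 0 ≤ b x := fun x => by simpa using ContinuousMap.le_def.1 hb0 x
    have hury : ∀ j : ℕ, ∃ φ : C(X, ℝ), Set.EqOn φ 0 (interior (K (j+1)))ᶜ ∧
        Set.EqOn φ 1 (K j) ∧ ∀ x, φ x ∈ Set.Icc (0:ℝ) 1 := fun j =>
      exists_continuous_zero_one_of_isClosed isOpen_interior.isClosed_compl
        (K.isCompact j).isClosed
        (disjoint_compl_left_iff.mpr (K.subset_interior_succ j))
    choose φ hφ0 hφ1 hφm using hury
    set c : ℕ → C(X, ℝ) := fun j => ((1/2 : ℝ)^j) • φ j + (1 - φ j) * (b + b) with hc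
    have hcx : ∀ j x, c j x = (1/2:ℝ)^j * φ j x + (1 - φ j x) * (b x + b x) := by
      intro j x; simp [hc]
    have hNex : ∀ j : ℕ, ∃ N, ∀ m ≥ N, ∀ n ≥ N, ∀ x ∈ K (j+1),
        |g m x - g n x| ≤ (1/2:ℝ)^j :=
      fun j => hcau (K (j+1)) (K.isCompact (j+1)) _ (by positivity)
    choose N hN using hNex
    set f' : ℕ → C(X, ℝ) :=
      fun k => Nat.rec ((b + b) ⊓ c 0) (fun k ih => ih ⊓ c (k+1)) k with hf'
    have hf'zero : f' 0 = (b + b) ⊓ c 0 := rfl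
    have hf'succ : ∀ k, f' (k+1) = f' k ⊓ c (k+1) := fun _ => rfl
    have hf'zerox : ∀ x, f' 0 x = min (b x + b x) (c 0 x) := by
      intro x; rw [hf'zero]; simp [ContinuousMap.inf_apply]
    have hf'succx : ∀ k x, f' (k+1) x = min (f' k x) (c (k+1) x) := by
      intro k x; rw [hf'succ]; simp [ContinuousMap.inf_apply]
    have hmain : ∀ k : ℕ, (∀ x, f' k x ≤ b x + b x) ∧ (∀ j ≤ k, ∀ x, f' k x ≤ c j x) ∧
        (∀ x (v : ℝ), v ≤ b x + b x → (∀ j ≤ k, v ≤ c j x) → v ≤ f' k x) := by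
      intro k
      induction k with
      | zero =>
        refine ⟨fun x => ?_, fun j hj x => ?_, fun x v h1 h2 => ?_⟩
        · rw [hf'zerox]; exact min_le_left _ _
        · interval_cases j
          rw [hf'zerox]; exact min_le_right _ _
        · rw [hf'zerox]; exact le_min h1 (h2 0 le_rfl)
      | succ k ih =>
        refine ⟨fun x => ?_, fun j hj x => ?_, fun x v h1 h2 => ?_⟩
        · rw [hf'succx]; exact (min_le_left _ _).trans (ih.1 x)
        · rcases Nat.lt_succ_iff_lt_or_eq.1 (Nat.lt_succ_of_le hj) with h | rfl
          · rw [hf'succx]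
            exact (min_le_left _ _).trans (ih.2.1 j (Nat.lt_succ_iff.1 h) x)
          · rw [hf'succx]; exact min_le_right _ _
        · rw [hf'succx]
          exact le_min (ih.2.2 x v h1 fun j hj => h2 j (hj.trans (Nat.le_succ _)))
            (h2 (k+1) le_rfl)
    have hcpos : ∀ j x, 0 ≤ c j x := by
      intro j x
      rw [hcx]
      have h1 := (hφm j x).1
      have h2 := (hφm j x).2
      have h3 := hbx x
      have h4 : (0:ℝ) ≤ (1/2:ℝ)^j := by positivity
      nlinarith
    have hnn : ∀ k x, 0 ≤ f' k x := by
      intro k x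
      refine (hmain k).2.2 x 0 (by linarith [hbx x]) fun j _ => hcpos j x
    have hf'I : ∀ k, f' k ∈ I := by
      intro k
      refine hI.2.2.2 _ (b + b) (hI.2.1 b b hbI hbI) fun x => ?_
      rw [abs_of_nonneg (hnn k x)]
      have h1 := (hmain k).1 x
      have h2 : (b + b) x = b x + b x := rfl
      rw [h2, abs_of_nonneg (by linarith [hbx x])]
      exact h1
    refine ⟨f', hf'I, ⟨fun k => ?_, fun x => ?_⟩, fun k => ?_⟩
    · rw [hf'succ]; exact inf_le_left
    · constructor
      · rintro y ⟨k, rfl⟩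
        exact hnn k x
      · intro w hw
        obtain ⟨n, hn⟩ := K.exists_mem x
        have key : ∀ m, n ≤ m → w ≤ (1/2:ℝ)^m := by
          intro m hm
          have h1 : w ≤ f' m x := hw ⟨m, rfl⟩
          have h2 : f' m x ≤ c m x := (hmain m).2.1 m le_rfl x
          have h3 : φ m x = 1 := by simpa using hφ1 m (K.subset hm hn)
          rw [hcx, h3] at h2
          simp at h2
          have he : ((1:ℝ)/2)^m = ((2:ℝ)^m)⁻¹ := by rw [one_div, inv_pow]
          rw [he]
          linarith
        by_contra hcon
        push_neg at hcon
        obtain ⟨m, hm⟩ := exists_pow_lt_of_lt_one hcon (by norm_num : (1/2:ℝ) < 1)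
        have h1 := key (max m n) (le_max_right _ _)
        have h2 : ((1/2:ℝ))^(max m n) ≤ (1/2:ℝ)^m :=
          pow_le_pow_of_le_one (by norm_num) (by norm_num) (le_max_left _ _)
        linarith
    · set Nk := (Finset.range (k+1)).sup N with hNk
      refine ⟨Nk, fun n hn x => ?_⟩
      have hvb : |g n x - g Nk x| ≤ b x + b x := by
        have h1 : |g n x - g Nk x| ≤ |g n x| + |g Nk x| := abs_sub _ _
        have h2 := hbd n x
        have h3 := hbd Nk x
        linarith
      refine (hmain k).2.2 x _ hvb fun j hj => ?_
      have hNj : N j ≤ Nk := Finset.le_sup (Finset.mem_range.2 (Nat.lt_succ_of_le hj))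
      by_cases hxK : x ∈ K (j+1)
      · have h1 := hN j n (hNj.trans hn) Nk hNj x hxK
        have hφ1' := (hφm j x).1
        have hφ2' := (hφm j x).2
        rw [hcx]
        nlinarith [mul_nonneg hφ1' (sub_nonneg.2 h1),
          mul_nonneg (sub_nonneg.2 hφ2') (sub_nonneg.2 hvb)]
      · have hx' : x ∈ (interior (K (j+1)))ᶜ := fun h => hxK (interior_subset h)
        have h0 : φ j x = 0 := by simpa using hφ0 j hx'
        rw [hcx, h0]
        simpa using hvb
end

section
/- If (g_n) is a strict I-Cauchy sequence in a Riesz ideal I of C(X, ℝ), then (g_n) converges uniformly on all compact subsets of X to some limit ĝ which lies in I, and (g_n) is strictly I-convergent to ĝ. -/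
variable {X : Type*} [TopologicalSpace X]

/-!
The pointwise limit `G` of a strict `I`-Cauchy sequence satisfies `|G - gₙ| ≤ 2 fₖ` for `n ≥ Nₖ`.
By Dini's theorem the decreasing sequence `fₖ` tends to `0` locally uniformly, hence so does
`G - gₙ`; thus `G` is continuous and the convergence is uniform on compact sets. Finally
`|G| ≤ 2 f₀ + |g_{N₀}|` puts `G` in the ideal.
-/

open Filter Topology

namespace IsRieszIdeal

variable {I : Set C(X, ℝ)}

lemma add_mem (hI : IsRieszIdeal I) {f g : C(X, ℝ)} (hf : f ∈ I) (hg : g ∈ I) : f + g ∈ I :=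
  hI.2.1 f g hf hg

lemma smul_mem (hI : IsRieszIdeal I) (c : ℝ) {f : C(X, ℝ)} (hf : f ∈ I) : c • f ∈ I :=
  hI.2.2.1 c f hf

lemma mem_of_abs_le (hI : IsRieszIdeal I) {f g : C(X, ℝ)} (hg : g ∈ I)
    (hfg : ∀ x, |f x| ≤ |g x|) : f ∈ I :=
  hI.2.2.2 f g hg hfg

lemma abs_mem (hI : IsRieszIdeal I) {g : C(X, ℝ)} (hg : g ∈ I) : |g| ∈ I :=
  hI.mem_of_abs_le hg fun x => by simp

lemma mem_of_abs_sub_le (hI : IsRieszIdeal I) {u g h : C(X, ℝ)} (hg : g ∈ I) (hh : h ∈ I)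
    (hu : ∀ x, |u x - g x| ≤ h x) : u ∈ I := by
  refine hI.mem_of_abs_le (hI.add_mem hh (hI.abs_mem hg)) fun x => ?_
  calc |u x| ≤ |u x - g x| + |g x| := by simpa using abs_add_le (u x - g x) (g x)
    _ ≤ h x + |g x| := by gcongr; exact hu x
    _ ≤ |(h + |g|) x| := by simpa using le_abs_self (h x + |g x|)

end IsRieszIdeal

lemma StrictConvTo.mem {I : Set C(X, ℝ)} (hI : IsRieszIdeal I) {g : ℕ → C(X, ℝ)} {g' : C(X, ℝ)}
    (hg : ∀ n, g n ∈ I) (h : StrictConvTo I g g') : g' ∈ I := by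
  obtain ⟨f, hfI, -, hb⟩ := h
  obtain ⟨N, hN⟩ := hb 0
  exact hI.mem_of_abs_sub_le (hg N) (hfI 0) (hN N le_rfl)

namespace DecrPtwInfZero

variable {f : ℕ → C(X, ℝ)}

lemma antitone (hf : DecrPtwInfZero f) : Antitone f :=
  antitone_nat_of_succ_le hf.1

lemma tendsto_zero (hf : DecrPtwInfZero f) (x : X) : Tendsto (f · x) atTop (𝓝 0) :=
  tendsto_atTop_isGLB (fun _ _ h => hf.antitone h x) (hf.2 x)

lemma tendstoLocallyUniformly_zero (hf : DecrPtwInfZero f) :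
    TendstoLocallyUniformly (fun k x => f k x) 0 atTop :=
  Antitone.tendstoLocallyUniformly_of_forall_tendsto (fun k => (f k).continuous)
    (fun _ _ h x => hf.antitone h x) continuous_const hf.tendsto_zero

lemma const_smul (hf : DecrPtwInfZero f) {c : ℝ} (hc : 0 ≤ c) :
    DecrPtwInfZero fun k => c • f k := by
  refine ⟨fun k x => ?_, fun x => ?_⟩
  · simpa using mul_le_mul_of_nonneg_left (hf.1 k x) hc
  · simpa [← Set.range_comp, Function.comp_def] using (hf.2 x).mul_left hc

end DecrPtwInfZero

section StrictCauchy

variable {g f : ℕ → C(X, ℝ)} {N : ℕ → ℕ}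

lemma abs_sub_le_two_mul_of_cauchy_bound
    (hN : ∀ k, ∀ n ≥ N k, ∀ x, |g n x - g (N k) x| ≤ f k x)
    {k m n : ℕ} (hm : N k ≤ m) (hn : N k ≤ n) (x : X) : |g m x - g n x| ≤ 2 * f k x :=
  calc |g m x - g n x| ≤ |g m x - g (N k) x| + |g (N k) x - g n x| := abs_sub_le _ _ _
    _ ≤ 2 * f k x := by rw [abs_sub_comm (g (N k) x)]; linarith [hN k m hm x, hN k n hn x]

lemma exists_limit_of_cauchy_bound (hf : DecrPtwInfZero f)
    (hN : ∀ k, ∀ n ≥ N k, ∀ x, |g n x - g (N k) x| ≤ f k x) :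
    ∃ G : X → ℝ, ∀ k, ∀ n ≥ N k, ∀ x, |G x - g n x| ≤ 2 * f k x := by
  have hcauchy (x : X) : CauchySeq (g · x) := by
    refine Metric.cauchySeq_iff.2 fun ε hε => ?_
    obtain ⟨k, hk⟩ := ((hf.tendsto_zero x).eventually (eventually_lt_nhds (half_pos hε))).exists
    refine ⟨N k, fun m hm n hn => ?_⟩
    rw [Real.dist_eq]
    linarith [abs_sub_le_two_mul_of_cauchy_bound hN hm hn x]
  choose G hG using fun x => cauchySeq_tendsto_of_complete (hcauchy x)
  refine ⟨G, fun k n hn x => le_of_tendsto ((hG x).sub_const _).abs ?_⟩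
  filter_upwards [eventually_ge_atTop (N k)] with m hm
  exact abs_sub_le_two_mul_of_cauchy_bound hN hm hn x

lemma StrictCauchy.exists_limit_bound {I : Set C(X, ℝ)} (hI : IsRieszIdeal I)
    (hC : StrictCauchy I g) :
    ∃ (G : X → ℝ) (f : ℕ → C(X, ℝ)), (∀ k, f k ∈ I) ∧ DecrPtwInfZero f ∧
      ∀ k, ∃ N, ∀ n ≥ N, ∀ x, |G x - g n x| ≤ f k x := by
  obtain ⟨f, hfI, hf, hb⟩ := hC
  choose N hN using hb
  obtain ⟨G, hG⟩ := exists_limit_of_cauchy_bound hf hN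
  exact ⟨G, fun k => (2 : ℝ) • f k, fun k => hI.smul_mem 2 (hfI k), hf.const_smul zero_le_two,
    fun k => ⟨N k, fun n hn x => by simpa using hG k n hn x⟩⟩

end StrictCauchy

lemma tendstoLocallyUniformly_of_abs_sub_le {F g : ℕ → X → ℝ} {G : X → ℝ}
    (hF : TendstoLocallyUniformly F 0 atTop)
    (hb : ∀ k, ∃ N, ∀ n ≥ N, ∀ x, |G x - g n x| ≤ F k x) : TendstoLocallyUniformly g G atTop := by
  refine Metric.tendstoLocallyUniformly_iff.2 fun ε hε x => ?_
  obtain ⟨t, ht, hFt⟩ := Metric.tendstoLocallyUniformly_iff.1 hF ε hε x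
  obtain ⟨k, hk⟩ := hFt.exists
  obtain ⟨N, hN⟩ := hb k
  refine ⟨t, ht, eventually_atTop.2 ⟨N, fun n hn y hy => ?_⟩⟩
  have hFk := hk y hy
  rw [Pi.zero_apply, Real.dist_eq, zero_sub, abs_neg] at hFk
  rw [Real.dist_eq]
  exact (hN n hn y).trans_lt ((le_abs_self _).trans_lt hFk)

theorem strictCauchy_converges_general
    (X : Type*) [TopologicalSpace X]
    (I : Set C(X, ℝ)) (hI : IsRieszIdeal I)
    (g : ℕ → C(X, ℝ)) (hg : ∀ n, g n ∈ I) (hC : StrictCauchy I g) :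
    ∃ g' : C(X, ℝ), g' ∈ I ∧
      (∀ K : Set X, IsCompact K → ∀ ε > (0 : ℝ), ∃ N, ∀ n ≥ N, ∀ x ∈ K,
        |g' x - g n x| ≤ ε) ∧
      StrictConvTo I g g' := by
  obtain ⟨G, f, hfI, hf, hb⟩ := hC.exists_limit_bound hI
  have hlim : TendstoLocallyUniformly (fun n x => g n x) G atTop :=
    tendstoLocallyUniformly_of_abs_sub_le hf.tendstoLocallyUniformly_zero hb
  let g' : C(X, ℝ) := ⟨G, hlim.continuous (Frequently.of_forall fun n => (g n).continuous)⟩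
  have hconv : StrictConvTo I g g' := ⟨f, hfI, hf, hb⟩
  refine ⟨g', hconv.mem hI hg, fun K hK ε hε => ?_, hconv⟩
  have hunif : TendstoUniformlyOn (fun n x => g n x) G atTop K :=
    (tendstoLocallyUniformlyOn_iff_tendstoUniformlyOn_of_compact hK).1
      hlim.tendstoLocallyUniformlyOn
  obtain ⟨N, hN⟩ := eventually_atTop.1 (Metric.tendstoUniformlyOn_iff.1 hunif ε hε)
  exact ⟨N, fun n hn x hx => (hN n hn x hx).le⟩

theorem strictCauchy_converges
    (X : Type*) [TopologicalSpace X] [LocallyCompactSpace X] [T2Space X] [LindelofSpace X]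
    (I : Set C(X, ℝ)) (hI : IsRieszIdeal I)
    (g : ℕ → C(X, ℝ)) (hg : ∀ n, g n ∈ I) (hC : StrictCauchy I g) :
    ∃ g' : C(X, ℝ), g' ∈ I ∧
      (∀ K : Set X, IsCompact K → ∀ ε > (0 : ℝ), ∃ N, ∀ n ≥ N, ∀ x ∈ K,
        |g' x - g n x| ≤ ε) ∧
      StrictConvTo I g g' :=
  strictCauchy_converges_general X I hI g hg hC
end

section
/- A sequence (g_n) in a Riesz ideal I of C(X, ℝ) is strictly I-convergent to ĝ ∈ I if and only if there exists b ∈ I⁺ with |g_n| ≤ b for all n and (g_n) converges to ĝ uniformly on every compact subset of X. -/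
variable {X : Type*} [TopologicalSpace X]

private lemma sigmaCompact_of_lindelof' (X : Type*) [TopologicalSpace X] [LocallyCompactSpace X]
    [LindelofSpace X] : SigmaCompactSpace X := by
  choose K hKc hKn using fun x : X => exists_compact_mem_nhds (x := x)
  obtain ⟨t, tc, ht⟩ := LindelofSpace.elim_nhds_subcover K fun x => hKn x
  exact ⟨ht ▸ isSigmaCompact_biUnion tc fun x _ => (hKc x).isSigmaCompact⟩

theorem strictConvTo_iff
    (X : Type*) [TopologicalSpace X] [LocallyCompactSpace X] [T2Space X] [LindelofSpace X]
    (I : Set C(X, ℝ)) (hI : IsRieszIdeal I)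
    (g : ℕ → C(X, ℝ)) (hg : ∀ n, g n ∈ I) (g' : C(X, ℝ)) (hg' : g' ∈ I) :
    StrictConvTo I g g' ↔
      (∃ b ∈ I, 0 ≤ b ∧ (∀ n x, |g n x| ≤ b x) ∧
        ∀ K : Set X, IsCompact K → ∀ ε > (0 : ℝ), ∃ N, ∀ n ≥ N, ∀ x ∈ K,
          |g' x - g n x| ≤ ε) := by
  constructor
  · intro hsc
    classical
    obtain ⟨hI0, hIadd, hIsmul, hIsolid⟩ := hI
    obtain ⟨f, hfI, ⟨hdec, hglb⟩, hconv⟩ := hsc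
    have hanti : Antitone f := antitone_nat_of_succ_le hdec
    have hfanti : ∀ j k : ℕ, j ≤ k → ∀ x, f k x ≤ f j x := fun j k hjk x => hanti hjk x
    have hf0 : ∀ (k : ℕ) (x : X), 0 ≤ f k x := fun k x => (hglb x).1 ⟨k, rfl⟩
    obtain ⟨N0, hN0⟩ := hconv 0
    set b : C(X, ℝ) := |g'| + f 0 + (Finset.range N0).sum (fun n => |g n|) with hb
    have habsI : ∀ h : C(X, ℝ), h ∈ I → |h| ∈ I := fun h hh =>
      hIsolid _ h hh (fun x => by simp [ContinuousMap.abs_apply])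
    have hsumI : (Finset.range N0).sum (fun n => |g n|) ∈ I := by
      refine Finset.sum_induction _ (· ∈ I) (fun a b ha hb => hIadd a b ha hb) hI0 ?_
      exact fun n _ => habsI _ (hg n)
    have hbI : b ∈ I := hIadd _ _ (hIadd _ _ (habsI _ hg') (hfI 0)) hsumI
    have hbeval : ∀ x, b x = |g' x| + f 0 x + ∑ n ∈ Finset.range N0, |g n x| := by
      intro x
      simp [hb, ContinuousMap.abs_apply]
    have hsum_nonneg : ∀ x, (0:ℝ) ≤ ∑ n ∈ Finset.range N0, |g n x| :=
      fun x => Finset.sum_nonneg fun n _ => abs_nonneg _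
    refine ⟨b, hbI, ?_, ?_, ?_⟩
    · intro x
      have := hbeval x
      have := hf0 0 x
      have := hsum_nonneg x
      show (0:ℝ) ≤ b x
      have := abs_nonneg (g' x)
      linarith
    · intro n x
      have hbx := hbeval x
      rcases le_or_gt N0 n with h | h
      · have h1 := hN0 n h x
        have h2 := abs_sub_abs_le_abs_sub (g n x) (g' x)
        rw [abs_sub_comm] at h2
        have := hsum_nonneg x
        linarith
      · have h1 : |g n x| ≤ ∑ m ∈ Finset.range N0, |g m x| :=
          Finset.single_le_sum (fun m _ => abs_nonneg (g m x)) (Finset.mem_range.mpr h)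
        have := abs_nonneg (g' x)
        have := hf0 0 x
        linarith
    · intro K hK ε hε
      have hUx : ∀ x ∈ K, ∃ k, f k x < ε := by
        intro x _
        by_contra h
        push_neg at h
        have : ε ≤ 0 := (hglb x).2 (by rintro y ⟨k, rfl⟩; exact h k)
        linarith
      choose k hk using hUx
      obtain ⟨t, ht⟩ := hK.elim_nhds_subcover' (fun x hx => {y | f (k x hx) y < ε})
        (fun x hx => IsOpen.mem_nhds
          (isOpen_lt (f (k x hx)).continuous continuous_const) (hk x hx))
      obtain ⟨N, hN⟩ := hconv (t.sup fun x => k x x.2)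
      refine ⟨N, fun n hn x hx => ?_⟩
      obtain ⟨i, hit, hiy⟩ : ∃ i ∈ t, f (k i i.2) x < ε := by
        have := ht hx
        simp only [Set.mem_iUnion, Set.mem_setOf_eq] at this
        obtain ⟨i, hit, hiy⟩ := this
        exact ⟨i, hit, hiy⟩
      have := hfanti (k i i.2) (t.sup fun x => k x x.2) (Finset.le_sup (f := fun x => k x.1 x.2) hit) x
      exact (hN n hn x).trans (this.trans hiy.le)
  · intro h
    classical
    obtain ⟨hI0, hIadd, hIsmul, hIsolid⟩ := hI
    obtain ⟨b, hbI, hb0, hbd, hU⟩ := h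
    have hbnn : ∀ x, (0:ℝ) ≤ b x := fun x => hb0 x
    have hb' : ∀ x, |g' x| ≤ b x := by
      intro x
      by_contra hc
      push_neg at hc
      obtain ⟨N, hN⟩ := hU {x} isCompact_singleton ((|g' x| - b x) / 2) (by linarith)
      have h1 := hN N le_rfl x rfl
      have h2 := hbd N x
      have h3 := abs_sub_abs_le_abs_sub (g' x) (g N x)
      linarith
    have hdiff : ∀ (n : ℕ) (x : X), |g' x - g n x| ≤ 2 * b x := by
      intro n x
      have := abs_sub (g' x) (g n x)
      have := hb' x
      have := hbd n x
      calc |g' x - g n x| ≤ |g' x| + |g n x| := abs_sub _ _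
        _ ≤ 2 * b x := by linarith
    haveI := sigmaCompact_of_lindelof' X
    -- Urysohn functions for the compact covering
    have φex : ∀ m : ℕ, ∃ φ : C(X, ℝ), Set.EqOn φ 1 (compactCovering X m) ∧
        HasCompactSupport φ ∧ ∀ x, φ x ∈ Set.Icc (0:ℝ) 1 := by
      intro m
      obtain ⟨φ, h1, _, h3, h4⟩ := exists_continuous_one_zero_of_isCompact
        (isCompact_compactCovering X m) isClosed_empty (by simp)
      exact ⟨φ, h1, h3, h4⟩
    choose φ hφ1 hφs hφ01 using φex
    set ψ : ℕ → C(X, ℝ) := fun k => (Finset.range (k + 1)).sup' Finset.nonempty_range_add_one φ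
      with hψdef
    have hψ_apply : ∀ k x, ψ k x = (Finset.range (k + 1)).sup' Finset.nonempty_range_add_one
        (fun i => φ i x) := fun k x => ContinuousMap.sup'_apply _ _ _
    have hψ_le_one : ∀ k x, ψ k x ≤ 1 := by
      intro k x
      rw [hψ_apply]
      exact Finset.sup'_le _ _ fun i _ => (hφ01 i x).2
    have hψ_nonneg : ∀ k x, 0 ≤ ψ k x := by
      intro k x
      rw [hψ_apply]
      exact le_trans (hφ01 0 x).1 (Finset.le_sup' (f := fun i => φ i x) (Finset.mem_range.mpr k.succ_pos))
    have hψ_ge : ∀ (i k : ℕ), i ≤ k → ∀ x, φ i x ≤ ψ k x := by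
      intro i k hik x
      rw [hψ_apply]
      exact Finset.le_sup' (f := fun i => φ i x) (Finset.mem_range.mpr (Nat.lt_succ_of_le hik))
    have hψ_mono : ∀ k x, ψ k x ≤ ψ (k + 1) x := by
      intro k x
      rw [hψ_apply, hψ_apply]
      exact Finset.sup'_le _ _ fun i hi => Finset.le_sup' (f := fun i => φ i x)
        (Finset.mem_range.mpr (lt_trans (Finset.mem_range.mp hi) (Nat.lt_succ_self _)))
    have hψ_one : ∀ (m k : ℕ), m ≤ k → ∀ x ∈ compactCovering X m, ψ k x = 1 := by
      intro m k hmk x hx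
      have h1 := hψ_ge m k hmk x
      have h2 := hψ_le_one k x
      have : φ m x = 1 := hφ1 m hx
      linarith
    -- compact sets containing supports
    set S : ℕ → Set X := fun k => ⋃ i ∈ Finset.range (k + 1), tsupport (φ i) with hSdef
    have hScomp : ∀ k, IsCompact (S k) :=
      fun k => (Finset.range (k + 1)).finite_toSet.isCompact_biUnion fun i _ => hφs i
    have hψ_zero : ∀ (k : ℕ) (x : X), x ∉ S k → ψ k x = 0 := by
      intro k x hx
      have hz : ∀ i ∈ Finset.range (k + 1), φ i x = 0 := by
        intro i hi
        apply image_eq_zero_of_notMem_tsupport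
        intro hmem
        exact hx (Set.mem_biUnion hi hmem)
      have h1 : ψ k x ≤ 0 := by
        rw [hψ_apply]
        exact Finset.sup'_le _ _ fun i hi => le_of_eq (hz i hi)
      linarith [hψ_nonneg k x]
    -- the dominating sequence
    set F : ℕ → C(X, ℝ) := fun k =>
      (2 : ℝ) • b * (1 - ψ k) + ((2 : ℝ) • b ⊓ ContinuousMap.const X ((1/2 : ℝ) ^ k)) with hFdef
    have hFeval : ∀ k x, F k x = 2 * (b x * (1 - ψ k x)) + min (2 * b x) ((1/2 : ℝ) ^ k) := by
      intro k x
      simp [hFdef, ContinuousMap.inf_apply, smul_eq_mul, mul_assoc]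
    have hFI : ∀ k, F k ∈ I := by
      intro k
      refine hIadd _ _ ?_ ?_
      · refine hIsolid _ ((2:ℝ) • b) (hIsmul 2 b hbI) fun x => ?_
        have h1 := hψ_nonneg k x
        have h2 := hψ_le_one k x
        have h3 := hbnn x
        have e1 : ((2:ℝ) • b * (1 - ψ k)) x = 2 * (b x * (1 - ψ k x)) := by
          simp [smul_eq_mul, mul_assoc]
        have e2 : ((2:ℝ) • b) x = 2 * b x := by simp [smul_eq_mul]
        rw [e1, e2, abs_of_nonneg (by nlinarith), abs_of_nonneg (by linarith)]
        nlinarith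
      · refine hIsolid _ ((2:ℝ) • b) (hIsmul 2 b hbI) fun x => ?_
        have h3 := hbnn x
        have hp : (0:ℝ) ≤ (1/2 : ℝ) ^ k := by positivity
        have e3 : ((2:ℝ) • b ⊓ ContinuousMap.const X ((1/2 : ℝ) ^ k)) x
            = min (2 * b x) ((1/2 : ℝ) ^ k) := by
          simp [ContinuousMap.inf_apply, smul_eq_mul]
        have e2 : ((2:ℝ) • b) x = 2 * b x := by simp [smul_eq_mul]
        rw [e3, e2, abs_of_nonneg (le_min (by linarith) hp), abs_of_nonneg (by linarith)]
        exact min_le_left (2 * b x) ((1/2 : ℝ) ^ k)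
    have hFnonneg : ∀ k x, 0 ≤ F k x := by
      intro k x
      rw [hFeval]
      have h1 := hψ_nonneg k x
      have h2 := hψ_le_one k x
      have h3 := hbnn x
      have hp : (0:ℝ) ≤ (1/2 : ℝ) ^ k := by positivity
      have := le_min (by linarith : (0:ℝ) ≤ 2 * b x) hp
      nlinarith [min_le_left (2 * b x) ((1/2 : ℝ) ^ k)]
    refine ⟨F, hFI, ⟨?_, ?_⟩, ?_⟩
    · -- decreasing
      intro k
      intro x
      show F (k+1) x ≤ F k x
      rw [hFeval, hFeval]
      have h1 := hψ_mono k x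
      have h3 := hbnn x
      have hpow : ((1/2:ℝ)) ^ (k+1) ≤ (1/2:ℝ) ^ k := by
        have : (0:ℝ) ≤ (1/2:ℝ) ^ k := by positivity
        rw [pow_succ]
        linarith
      have hmin : min (2 * b x) ((1/2 : ℝ) ^ (k+1)) ≤ min (2 * b x) ((1/2 : ℝ) ^ k) :=
        min_le_min le_rfl hpow
      nlinarith
    · -- pointwise infimum zero
      intro x
      constructor
      · rintro y ⟨k, rfl⟩
        exact hFnonneg k x
      · intro c hc
        obtain ⟨m, hm⟩ := exists_mem_compactCovering x
        by_contra hc0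
        push_neg at hc0
        obtain ⟨j, hj⟩ := exists_pow_lt_of_lt_one hc0 (by norm_num : (1/2:ℝ) < 1)
        have hk := hc ⟨m + j, rfl⟩
        have hx : x ∈ compactCovering X (m + j) :=
          compactCovering_subset X (Nat.le_add_right m j) hm
        have hψ1 : ψ (m + j) x = 1 := hψ_one (m+j) (m+j) le_rfl x hx
        have : F (m + j) x ≤ (1/2:ℝ) ^ (m + j) := by
          rw [hFeval, hψ1]
          simpa using min_le_right (2 * b x) ((1/2 : ℝ) ^ (m+j))
        have hle : ((1/2:ℝ)) ^ (m + j) ≤ (1/2:ℝ) ^ j := by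
          apply pow_le_pow_of_le_one (by norm_num) (by norm_num) (Nat.le_add_left j m)
        simp only at hk
        linarith
    · -- domination
      intro k
      obtain ⟨N, hN⟩ := hU (S k) (hScomp k) ((1/2:ℝ) ^ k) (by positivity)
      refine ⟨N, fun n hn x => ?_⟩
      rw [hFeval]
      by_cases hx : x ∈ S k
      · have h1 := hN n hn x hx
        have h2 := hdiff n x
        have h3 := hψ_nonneg k x
        have h4 := hψ_le_one k x
        have h5 := hbnn x
        have := le_min h2 h1
        nlinarith
      · have hψ0 := hψ_zero k x hx
        have h2 := hdiff n x
        have h5 := hbnn x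
        have hp : (0:ℝ) ≤ (1/2 : ℝ) ^ k := by positivity
        have hmn := le_min (by linarith : (0:ℝ) ≤ 2 * b x) hp
        rw [hψ0]
        nlinarith
end

section
/- The I-closure of a linear subspace S of a Riesz ideal I of C(X, ℝ) is again a linear subspace; if S is a Riesz subspace, its I-closure is a Riesz subspace; and if I is also a subalgebra of C(X, ℝ) and S is a subalgebra, then the I-closure of S is a subalgebra. -/
variable {X : Type*} [TopologicalSpace X]

section Aux

variable {X : Type*} [TopologicalSpace X]

private lemma aux_isGLB_mul_left {f : ℕ → ℝ} {c : ℝ} (hc : 0 ≤ c)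
    (h : IsGLB (Set.range f) 0) : IsGLB (Set.range fun k => c * f k) 0 := by
  constructor
  · rintro y ⟨k, rfl⟩
    exact mul_nonneg hc (h.1 ⟨k, rfl⟩)
  · intro b hb
    rcases hc.eq_or_lt with hc0 | hc0
    · have := hb ⟨0, rfl⟩
      simp only [← hc0, zero_mul] at this
      exact this
    · have hb' : b / c ≤ 0 := by
        apply h.2
        rintro y ⟨k, rfl⟩
        have := hb ⟨k, rfl⟩
        simp only at this
        rw [div_le_iff₀ hc0]
        linarith [this]
      have := (div_le_iff₀ hc0).mp hb'
      simpa using this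

private lemma aux_subset_iClosure {I S : Set C(X, ℝ)} : S ⊆ IClosure I S :=
  fun s hs => Set.mem_sInter.mpr fun _ hC => hC.2.1 hs

private lemma aux_iClosed_I {I : Set C(X, ℝ)} (hI : IsRieszIdeal I) : IClosed I I := by
  rintro g g' hg ⟨f, hf, hd, hc⟩
  obtain ⟨N, hN⟩ := hc 0
  have h1 : g' - g N ∈ I := by
    refine hI.2.2.2 _ (f 0) (hf 0) fun x => ?_
    have h2 := hN N le_rfl x
    have h3 : f 0 x ≤ |f 0 x| := le_abs_self _
    simpa [ContinuousMap.sub_apply] using h2.trans h3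
  have : g' = (g' - g N) + g N := by ring
  rw [this]
  exact hI.2.1 _ _ h1 (hg N)

private lemma aux_iClosure_subset {I S : Set C(X, ℝ)} (hI : IsRieszIdeal I)
    (hSI : S ⊆ I) : IClosure I S ⊆ I :=
  fun _ hx => hx I ⟨subset_rfl, hSI, aux_iClosed_I hI⟩

private lemma aux_iClosed_iClosure {I S : Set C(X, ℝ)} : IClosed I (IClosure I S) := by
  intro g g' hg hc
  refine Set.mem_sInter.mpr fun C hC => ?_
  exact hC.2.2 g g' (fun n => hg n C hC) hc

/-- The transfer lemma: if `φ` preserves strict convergence and maps `S` into the closure,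
then it maps the closure into the closure. -/
private lemma aux_transfer {I S : Set C(X, ℝ)} (hI : IsRieszIdeal I) (hSI : S ⊆ I)
    (φ : C(X, ℝ) → C(X, ℝ))
    (hconv : ∀ (g : ℕ → C(X, ℝ)) (g' : C(X, ℝ)), StrictConvTo I g g' →
      StrictConvTo I (fun n => φ (g n)) (φ g'))
    (hS : ∀ s ∈ S, φ s ∈ IClosure I S) :
    ∀ f ∈ IClosure I S, φ f ∈ IClosure I S := by
  intro f hf
  have hcl : IClosed I (IClosure I S) := aux_iClosed_iClosure
  have hsub : IClosure I S ⊆ I := aux_iClosure_subset hI hSI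
  have hT : f ∈ {g | g ∈ IClosure I S ∧ φ g ∈ IClosure I S} := by
    refine hf _ ⟨fun x hx => hsub hx.1, fun s hs => ⟨aux_subset_iClosure hs, hS s hs⟩, ?_⟩
    intro g g' hg hc
    exact ⟨hcl g g' (fun n => (hg n).1) hc,
      hcl (fun n => φ (g n)) (φ g') (fun n => (hg n).2) (hconv g g' hc)⟩
  exact hT.2

private lemma aux_conv_add_right {I : Set C(X, ℝ)} (h : C(X, ℝ)) {g : ℕ → C(X, ℝ)}
    {g' : C(X, ℝ)} (hg : StrictConvTo I g g') :
    StrictConvTo I (fun n => g n + h) (g' + h) := by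
  obtain ⟨f, hf, hd, hc⟩ := hg
  refine ⟨f, hf, hd, fun k => (hc k).imp fun N hN n hn x => ?_⟩
  simpa [ContinuousMap.add_apply, add_sub_add_right_eq_sub] using hN n hn x

private lemma aux_conv_add_left {I : Set C(X, ℝ)} (h : C(X, ℝ)) {g : ℕ → C(X, ℝ)}
    {g' : C(X, ℝ)} (hg : StrictConvTo I g g') :
    StrictConvTo I (fun n => h + g n) (h + g') := by
  obtain ⟨f, hf, hd, hc⟩ := hg
  refine ⟨f, hf, hd, fun k => (hc k).imp fun N hN n hn x => ?_⟩
  simpa [ContinuousMap.add_apply, add_sub_add_left_eq_sub] using hN n hn x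

private lemma aux_conv_smul {I : Set C(X, ℝ)} (hI : IsRieszIdeal I) (c : ℝ)
    {g : ℕ → C(X, ℝ)} {g' : C(X, ℝ)} (hg : StrictConvTo I g g') :
    StrictConvTo I (fun n => c • g n) (c • g') := by
  obtain ⟨f, hf, hd, hc⟩ := hg
  refine ⟨fun k => |c| • f k, fun k => hI.2.2.1 _ _ (hf k), ⟨?_, ?_⟩, ?_⟩
  · intro k
    rw [ContinuousMap.le_def]
    intro x
    simp only [ContinuousMap.smul_apply, smul_eq_mul]
    exact mul_le_mul_of_nonneg_left (ContinuousMap.le_def.mp (hd.1 k) x) (abs_nonneg c)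
  · intro x
    simpa [ContinuousMap.smul_apply, smul_eq_mul] using
      aux_isGLB_mul_left (abs_nonneg c) (hd.2 x)
  · intro k
    obtain ⟨N, hN⟩ := hc k
    refine ⟨N, fun n hn x => ?_⟩
    have := hN n hn x
    simp only [ContinuousMap.smul_apply, smul_eq_mul, ← mul_sub, abs_mul]
    exact mul_le_mul_of_nonneg_left this (abs_nonneg c)

private lemma aux_conv_abs {I : Set C(X, ℝ)} {g : ℕ → C(X, ℝ)}
    {g' : C(X, ℝ)} (hg : StrictConvTo I g g') :
    StrictConvTo I (fun n => |g n|) |g'| := by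
  obtain ⟨f, hf, hd, hc⟩ := hg
  refine ⟨f, hf, hd, fun k => (hc k).imp fun N hN n hn x => ?_⟩
  have h1 := hN n hn x
  have h2 : |(|g' x| - |g n x|)| ≤ |g' x - g n x| := abs_abs_sub_abs_le_abs_sub _ _
  calc |(|g'| x) - (|g n| x)| = |(|g' x| - |g n x|)| := by
        simp [ContinuousMap.abs_apply]
    _ ≤ |g' x - g n x| := h2
    _ ≤ f k x := h1

private lemma aux_conv_mul_right {I : Set C(X, ℝ)} (hI : IsRieszIdeal I)
    (hImul : ∀ f g : C(X, ℝ), f ∈ I → g ∈ I → f * g ∈ I)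
    (h : C(X, ℝ)) (hh : h ∈ I) {g : ℕ → C(X, ℝ)} {g' : C(X, ℝ)}
    (hg : StrictConvTo I g g') :
    StrictConvTo I (fun n => g n * h) (g' * h) := by
  obtain ⟨f, hf, hd, hc⟩ := hg
  refine ⟨fun k => |h| * f k, fun k => ?_, ⟨?_, ?_⟩, ?_⟩
  · refine hI.2.2.2 _ (h * f k) (hImul h (f k) hh (hf k)) fun x => ?_
    simp [ContinuousMap.mul_apply, ContinuousMap.abs_apply, abs_mul]
  · intro k
    rw [ContinuousMap.le_def]
    intro x
    simp only [ContinuousMap.mul_apply, ContinuousMap.abs_apply]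
    exact mul_le_mul_of_nonneg_left (ContinuousMap.le_def.mp (hd.1 k) x) (abs_nonneg _)
  · intro x
    simpa [ContinuousMap.mul_apply, ContinuousMap.abs_apply] using
      aux_isGLB_mul_left (abs_nonneg (h x)) (hd.2 x)
  · intro k
    obtain ⟨N, hN⟩ := hc k
    refine ⟨N, fun n hn x => ?_⟩
    have h1 := hN n hn x
    calc |(g' * h) x - (g n * h) x| = |g' x - g n x| * |h x| := by
          simp [ContinuousMap.mul_apply, ← sub_mul, abs_mul]
      _ ≤ f k x * |h x| := mul_le_mul_of_nonneg_right h1 (abs_nonneg _)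
      _ = (|h| * f k) x := by simp [ContinuousMap.mul_apply, ContinuousMap.abs_apply, mul_comm]

end Aux

theorem iClosure_algebraic_permanence
    (X : Type*) [TopologicalSpace X] [LocallyCompactSpace X] [T2Space X] [LindelofSpace X]
    (I : Set C(X, ℝ)) (hI : IsRieszIdeal I)
    (S : Set C(X, ℝ)) (hSI : S ⊆ I)
    (hzero : (0 : C(X, ℝ)) ∈ S)
    (hadd : ∀ f g : C(X, ℝ), f ∈ S → g ∈ S → f + g ∈ S)
    (hsmul : ∀ (c : ℝ) (f : C(X, ℝ)), f ∈ S → c • f ∈ S) :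
    ((0 : C(X, ℝ)) ∈ IClosure I S ∧
      (∀ f g : C(X, ℝ), f ∈ IClosure I S → g ∈ IClosure I S → f + g ∈ IClosure I S) ∧
      (∀ (c : ℝ) (f : C(X, ℝ)), f ∈ IClosure I S → c • f ∈ IClosure I S)) ∧
    ((∀ f : C(X, ℝ), f ∈ S → |f| ∈ S) →
      ∀ f : C(X, ℝ), f ∈ IClosure I S → |f| ∈ IClosure I S) ∧
    ((∀ f g : C(X, ℝ), f ∈ I → g ∈ I → f * g ∈ I) →
      (∀ f g : C(X, ℝ), f ∈ S → g ∈ S → f * g ∈ S) →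
      ∀ f g : C(X, ℝ), f ∈ IClosure I S → g ∈ IClosure I S → f * g ∈ IClosure I S) := by
  constructor
  · refine ⟨aux_subset_iClosure hzero, ?_, ?_⟩
    · have step1 : ∀ s ∈ S, ∀ h ∈ IClosure I S, s + h ∈ IClosure I S := by
        intro s hs
        exact aux_transfer hI hSI (fun h => s + h)
          (fun g g' hc => aux_conv_add_left s hc)
          (fun s' hs' => aux_subset_iClosure (hadd s s' hs hs'))
      intro f g hf hg
      exact aux_transfer hI hSI (fun f => f + g)
        (fun gg g' hc => aux_conv_add_right g hc)
        (fun s hs => step1 s hs g hg) f hf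
    · intro c f hf
      exact aux_transfer hI hSI (fun f => c • f)
        (fun g g' hc => aux_conv_smul hI c hc)
        (fun s hs => aux_subset_iClosure (hsmul c s hs)) f hf
  constructor
  · intro habs f hf
    exact aux_transfer hI hSI (fun f => |f|)
      (fun g g' hc => aux_conv_abs hc)
      (fun s hs => aux_subset_iClosure (habs s hs)) f hf
  · intro hImul hSmul f g hf hg
    have step1 : ∀ s ∈ S, ∀ h ∈ IClosure I S, s * h ∈ IClosure I S := by
      intro s hs
      refine aux_transfer hI hSI (fun h => s * h) (fun g g' hc => ?_)
        (fun s' hs' => aux_subset_iClosure (hSmul s s' hs hs'))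
      have := aux_conv_mul_right hI hImul s (hSI hs) hc
      simpa [mul_comm] using this
    exact aux_transfer hI hSI (fun f => f * g)
      (fun gg g' hc => aux_conv_mul_right hI hImul g (aux_iClosure_subset hI hSI hg) hc)
      (fun s hs => step1 s hs g hg) f hf
end

section
/- (Generalized Dini lemma) Let A be a unital subalgebra of C(X, ℝ) containing a nonnegative proper function p (preimages of compact intervals are compact). If (f_k) is a decreasing sequence in A with pointwise infimum 0, then there exists h ∈ A with h ≥ 0 such that for all ε > 0 there is k with f_k ≤ ε·h pointwise; in fact h = 1 + p·f_1 works. -/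
theorem generalized_dini
    (X : Type*) [TopologicalSpace X] [LocallyCompactSpace X] [T2Space X] [LindelofSpace X]
    (A : Subalgebra ℝ C(X, ℝ))
    (p : C(X, ℝ)) (hpA : p ∈ A) (hp0 : 0 ≤ p)
    (hproper : ∀ a b : ℝ, a ≤ b → IsCompact (p ⁻¹' Set.Icc a b))
    (f : ℕ → C(X, ℝ)) (hfA : ∀ k, f k ∈ A)
    (hdec : ∀ k, f (k + 1) ≤ f k)
    (hinf : ∀ x : X, IsGLB (Set.range fun k => f k x) 0) :
    (1 + p * f 0 ∈ A) ∧ 0 ≤ 1 + p * f 0 ∧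
      ∀ ε > (0 : ℝ), ∃ k, ∀ x : X, f k x ≤ ε * (1 + p x * f 0 x) := by
  have hf0 : ∀ k x, 0 ≤ f k x := fun k x => (hinf x).1 ⟨k, rfl⟩
  have hant : Antitone f := antitone_nat_of_succ_le hdec
  have hp0' : ∀ x, 0 ≤ p x := fun x => hp0 x
  refine ⟨A.add_mem A.one_mem (A.mul_mem hpA (hfA 0)), ?_, ?_⟩
  · rw [ContinuousMap.le_def]
    intro x
    have h2 : 0 ≤ p x * f 0 x := mul_nonneg (hp0' x) (hf0 0 x)
    simp only [ContinuousMap.add_apply, ContinuousMap.one_apply, ContinuousMap.mul_apply,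
      ContinuousMap.zero_apply]
    linarith
  · intro ε hε
    have hkey : ∀ x : X, ∃ k, f k x < ε := by
      intro x
      by_contra h
      push_neg at h
      have hlb : ε ∈ lowerBounds (Set.range fun k => f k x) := by
        rintro y ⟨k, rfl⟩; exact h k
      have := (hinf x).2 hlb
      linarith
    choose kf hkf using hkey
    have hK : IsCompact (p ⁻¹' Set.Icc 0 (1/ε)) := hproper 0 (1/ε) (by positivity)
    have hcover : (p ⁻¹' Set.Icc 0 (1/ε)) ⊆ ⋃ i : X, {y | f (kf i) y < ε} :=
      fun x _ => Set.mem_iUnion.2 ⟨x, hkf x⟩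
    obtain ⟨t, ht⟩ := hK.elim_finite_subcover (fun i : X => {y | f (kf i) y < ε})
      (fun i => isOpen_lt (f (kf i)).continuous continuous_const) hcover
    refine ⟨t.sup kf, fun x => ?_⟩
    have hε0 : 0 ≤ ε := le_of_lt hε
    have h2 : 0 ≤ p x * f 0 x := mul_nonneg (hp0' x) (hf0 0 x)
    by_cases hx : x ∈ p ⁻¹' Set.Icc 0 (1/ε)
    · obtain ⟨i, hit, hxi⟩ := Set.mem_iUnion₂.mp (ht hx)
      have h1 : f (t.sup kf) x ≤ f (kf i) x := hant (Finset.le_sup hit) x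
      have hxi' : f (kf i) x < ε := hxi
      nlinarith
    · have hpx : 1/ε < p x := by
        simp only [Set.mem_preimage, Set.mem_Icc, not_and, not_le] at hx
        exact hx (hp0' x)
      have h1 : 1 < p x * ε := (div_lt_iff₀ hε).mp hpx
      have h0 : f (t.sup kf) x ≤ f 0 x := hant (Nat.zero_le _) x
      nlinarith [hf0 0 x]
end

section
/- Let A be a unital *-algebra, Φ : A → ℂ a positive Hermitian linear map with associated seminorm ‖a‖_Φ = Φ(a*a)^{1/2}, and f ∈ A. If a sequence (g_n) in A is ‖·‖_Φ-convergent to ĝ ∈ A and (f g_n) is a ‖·‖_Φ-Cauchy sequence, then (f g_n) is ‖·‖_Φ-convergent to f ĝ. -/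
open scoped ComplexOrder
/-- The Hilbert seminorm associated with a positive Hermitian linear functional. -/
noncomputable def phiSeminorm {A : Type*} [Ring A] [Algebra ℂ A] [StarRing A]
    (Φ : A →ₗ[ℂ] ℂ) (a : A) : ℝ :=
  Real.sqrt (Φ (star a * a)).re

/-!
Put `u = f gₙ - f ĝ`. For any `m`, `‖u‖² = Φ(u*(f gₙ - f gₘ)) + Φ((f* u)*(gₘ - ĝ))`, so by
Cauchy–Schwarz `‖u‖² ≤ ‖u‖ ‖f gₙ - f gₘ‖ + ‖f* u‖ ‖gₘ - ĝ‖`. Once `n` and `m` are beyond the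
Cauchy index for `ε`, the first term is at most `‖u‖ ε`, and the second tends to `0` as `m → ∞`.
Hence `‖u‖² ≤ ‖u‖ ε`, i.e. `‖u‖ ≤ ε`.
-/

open Filter Topology

section

variable {A : Type*} [Ring A] [Algebra ℂ A] [StarRing A] {Φ : A →ₗ[ℂ] ℂ}

lemma re_apply_star_mul_self_nonneg (hpos : ∀ a : A, 0 ≤ Φ (star a * a)) (a : A) :
    0 ≤ (Φ (star a * a)).re :=
  (Complex.nonneg_iff.1 (hpos a)).1

lemma phiSeminorm_nonneg (a : A) : 0 ≤ phiSeminorm Φ a :=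
  Real.sqrt_nonneg _

lemma phiSeminorm_sq (hpos : ∀ a : A, 0 ≤ Φ (star a * a)) (a : A) :
    phiSeminorm Φ a ^ 2 = (Φ (star a * a)).re :=
  Real.sq_sqrt (re_apply_star_mul_self_nonneg hpos a)

variable [StarModule ℂ A]

/-- The norm of this core is definitionally `phiSeminorm Φ`. -/
noncomputable abbrev phiCore (hherm : ∀ a : A, Φ (star a) = starRingEnd ℂ (Φ a))
    (hpos : ∀ a : A, 0 ≤ Φ (star a * a)) : PreInnerProductSpace.Core ℂ A where
  inner a b := Φ (star a * b)
  conj_inner_symm a b := by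
    simp only [← hherm, star_mul, star_star]
  re_inner_nonneg := re_apply_star_mul_self_nonneg hpos
  add_left a b c := by
    simp only [star_add, add_mul, map_add]
  smul_left a b r := by
    simp only [star_smul, smul_mul_assoc, map_smul, smul_eq_mul]
    rfl

lemma norm_apply_star_mul_le (hherm : ∀ a : A, Φ (star a) = starRingEnd ℂ (Φ a))
    (hpos : ∀ a : A, 0 ≤ Φ (star a * a)) (a b : A) :
    ‖Φ (star a * b)‖ ≤ phiSeminorm Φ a * phiSeminorm Φ b :=
  letI := phiCore hherm hpos
  letI := InnerProductSpace.Core.toNorm (𝕜 := ℂ) (F := A)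
  InnerProductSpace.Core.norm_inner_le_norm (𝕜 := ℂ) a b

lemma phiSeminorm_mul_sub_sq_le (hherm : ∀ a : A, Φ (star a) = starRingEnd ℂ (Φ a))
    (hpos : ∀ a : A, 0 ≤ Φ (star a * a)) (f a b c : A) :
    phiSeminorm Φ (f * a - f * c) ^ 2 ≤
      phiSeminorm Φ (f * a - f * c) * phiSeminorm Φ (f * a - f * b) +
        phiSeminorm Φ (star f * (f * a - f * c)) * phiSeminorm Φ (b - c) := by
  set u := f * a - f * c
  have hsplit : star u * u = star u * (f * a - f * b) + star (star f * u) * (b - c) := by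
    rw [star_mul, star_star, mul_assoc, ← mul_add]
    congr 1
    simp only [u, mul_sub]
    abel
  calc phiSeminorm Φ u ^ 2
      = (Φ (star u * (f * a - f * b))).re + (Φ (star (star f * u) * (b - c))).re := by
        rw [phiSeminorm_sq hpos, hsplit, map_add, Complex.add_re]
    _ ≤ ‖Φ (star u * (f * a - f * b))‖ + ‖Φ (star (star f * u) * (b - c))‖ :=
        add_le_add (Complex.re_le_norm _) (Complex.re_le_norm _)
    _ ≤ _ := add_le_add (norm_apply_star_mul_le hherm hpos _ _)
        (norm_apply_star_mul_le hherm hpos _ _)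

end

lemma tendsto_nhds_zero_of_forall_le {u : ℕ → ℝ} (h0 : ∀ n, 0 ≤ u n)
    (h : ∀ ε > 0, ∃ N, ∀ n ≥ N, u n ≤ ε) : Tendsto u atTop (𝓝 0) := by
  refine Metric.nhds_basis_closedBall.tendsto_right_iff.2 fun ε hε => ?_
  obtain ⟨N, hN⟩ := h ε hε
  filter_upwards [eventually_ge_atTop N] with n hn
  simpa [abs_of_nonneg (h0 n)] using hN n hn

theorem mul_convergence_of_cauchy
    (A : Type*) [Ring A] [Algebra ℂ A] [StarRing A] [StarModule ℂ A]
    (Φ : A →ₗ[ℂ] ℂ)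
    (hherm : ∀ a : A, Φ (star a) = starRingEnd ℂ (Φ a))
    (hpos : ∀ a : A, 0 ≤ Φ (star a * a))
    (f : A) (g : ℕ → A) (g' : A)
    (hconv : ∀ ε > (0 : ℝ), ∃ N, ∀ n ≥ N, phiSeminorm Φ (g n - g') ≤ ε)
    (hcauchy : ∀ ε > (0 : ℝ), ∃ N, ∀ m ≥ N, ∀ n ≥ N,
      phiSeminorm Φ (f * g m - f * g n) ≤ ε) :
    ∀ ε > (0 : ℝ), ∃ N, ∀ n ≥ N, phiSeminorm Φ (f * g n - f * g') ≤ ε := by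
  intro ε hε
  obtain ⟨N, hN⟩ := hcauchy ε hε
  refine ⟨N, fun n hn => ?_⟩
  set s := phiSeminorm Φ (f * g n - f * g')
  set C := phiSeminorm Φ (star f * (f * g n - f * g'))
  have hlim : Tendsto (fun m => s * ε + C * phiSeminorm Φ (g m - g')) atTop (𝓝 (s * ε)) := by
    simpa using (tendsto_nhds_zero_of_forall_le (fun _ => phiSeminorm_nonneg _) hconv).const_mul C
      |>.const_add (s * ε)
  have hsq : s ^ 2 ≤ s * ε := by
    refine ge_of_tendsto hlim ?_
    filter_upwards [eventually_ge_atTop N] with m hm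
    calc s ^ 2 ≤ s * phiSeminorm Φ (f * g n - f * g m) + C * phiSeminorm Φ (g m - g') :=
          phiSeminorm_mul_sub_sq_le hherm hpos f (g n) (g m) g'
      _ ≤ s * ε + C * phiSeminorm Φ (g m - g') := by
          gcongr
          · exact phiSeminorm_nonneg _
          · exact hN n hn m hm
  nlinarith [phiSeminorm_nonneg (Φ := Φ) (f * g n - f * g')]
end
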